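/- arXiv:2509.11129 — 7 statements merged into one kernel-verified Lean document; each statement's English description precedes it below -/
import Mathlib

section
/- For every natural number ω ≥ 1 and every smooth 2πω-periodic function f : ℝ → ℝ with zero mean over one period (∫₀^{2πω} f(θ) dθ = 0), one has 4∫₀^{2πω} f''(θ)² dθ − 10∫₀^{2πω} f'(θ)² dθ + 8∫₀^{2πω} f(θ)² dθ ≥ (7/4) ∫₀^{2πω} f(θ)² dθ. -/
open Real

/-- Coercivity of the quadratic form `4∫f''² − 10∫f'² + 8∫f²` for smooth
`2πω`-periodic zero-mean functions. -/
theorem stmt_0 (ω : ℕ) (hω : 1 ≤ ω) (f : ℝ → ℝ)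
    (hf : ContDiff ℝ (⊤ : ℕ∞) f)
    (hper : ∀ θ : ℝ, f (θ + 2 * π * ω) = f θ)
    (hmean : (∫ θ in (0:ℝ)..(2 * π * ω), f θ) = 0) :
    4 * (∫ θ in (0:ℝ)..(2 * π * ω), (deriv (deriv f) θ) ^ 2)
      - 10 * (∫ θ in (0:ℝ)..(2 * π * ω), (deriv f θ) ^ 2)
      + 8 * (∫ θ in (0:ℝ)..(2 * π * ω), (f θ) ^ 2)
      ≥ (7 / 4) * ∫ θ in (0:ℝ)..(2 * π * ω), (f θ) ^ 2 := by
  set T : ℝ := 2 * π * ω with hT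
  have hT0 : 0 ≤ T := by
    have : (0:ℝ) < π := Real.pi_pos
    have : (1:ℝ) ≤ (ω:ℝ) := by exact_mod_cast hω
    positivity
  -- smoothness of derivatives
  have hf' : ContDiff ℝ (⊤ : ℕ∞) f := hf.of_le (by simp)
  have hf1 : ContDiff ℝ (⊤ : ℕ∞) (deriv f) := (contDiff_infty_iff_deriv.mp hf').2
  have hf2 : ContDiff ℝ (⊤ : ℕ∞) (deriv (deriv f)) := (contDiff_infty_iff_deriv.mp hf1).2
  have hcf : Continuous f := hf.continuous
  have hcf1 : Continuous (deriv f) := hf1.continuous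
  have hcf2 : Continuous (deriv (deriv f)) := hf2.continuous
  -- periodicity of f and f'
  have hperf : Function.Periodic f T := hper
  have hperf1 : Function.Periodic (deriv f) T := by
    intro x
    have : (fun y => f (y + T)) = f := funext hperf
    calc deriv f (x + T) = deriv (fun y => f (y + T)) x := (deriv_comp_add_const f T x).symm
    _ = deriv f x := by rw [this]
  -- integration by parts: ∫ f * f'' = -∫ (f')²
  have hibp : (∫ θ in (0:ℝ)..T, f θ * deriv (deriv f) θ)
      = - ∫ θ in (0:ℝ)..T, (deriv f θ) ^ 2 := by
    have h := intervalIntegral.integral_mul_deriv_eq_deriv_mul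
      (u := f) (u' := deriv f) (v := deriv f) (v' := deriv (deriv f))
      (a := (0:ℝ)) (b := T)
      (fun x _ => (hf'.differentiable (by simp) x).hasDerivAt)
      (fun x _ => (hf1.differentiable (by simp) x).hasDerivAt)
      (hcf1.intervalIntegrable _ _)
      (hcf2.intervalIntegrable _ _)
    have e1 : f T = f 0 := by simpa using hperf 0
    have e2 : deriv f T = deriv f 0 := by simpa using hperf1 0
    rw [e1, e2] at h
    simp only [pow_two]
    linarith [h]
  -- nonnegativity of ∫ (2f'' + (5/2)f)²
  have hnn : 0 ≤ ∫ θ in (0:ℝ)..T, (2 * deriv (deriv f) θ + (5/2) * f θ) ^ 2 :=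
    intervalIntegral.integral_nonneg hT0 (fun x _ => sq_nonneg _)
  -- expand the square
  have hexp : (∫ θ in (0:ℝ)..T, (2 * deriv (deriv f) θ + (5/2) * f θ) ^ 2)
      = 4 * (∫ θ in (0:ℝ)..T, (deriv (deriv f) θ) ^ 2)
        + 10 * (∫ θ in (0:ℝ)..T, f θ * deriv (deriv f) θ)
        + (25/4) * ∫ θ in (0:ℝ)..T, (f θ) ^ 2 := by
    have h1 : (∫ θ in (0:ℝ)..T, (2 * deriv (deriv f) θ + (5/2) * f θ) ^ 2)
        = ∫ θ in (0:ℝ)..T,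
            (4 * (deriv (deriv f) θ) ^ 2 + (10 * (f θ * deriv (deriv f) θ)
              + (25/4) * (f θ) ^ 2)) := by
      apply intervalIntegral.integral_congr
      intro x _
      ring
    rw [h1, intervalIntegral.integral_add, intervalIntegral.integral_add,
        intervalIntegral.integral_const_mul, intervalIntegral.integral_const_mul,
        intervalIntegral.integral_const_mul]
    · ring
    · exact ((continuous_const.mul (hcf.mul hcf2)).intervalIntegrable _ _)
    · exact ((continuous_const.mul (hcf.pow 2)).intervalIntegrable _ _)
    · exact ((continuous_const.mul (hcf2.pow 2)).intervalIntegrable _ _)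
    · exact (((continuous_const.mul (hcf.mul hcf2)).add
        (continuous_const.mul (hcf.pow 2))).intervalIntegrable _ _)
  rw [hexp, hibp] at hnn
  linarith
end

section
/- For every natural number ω ≥ 1 there exists δ > 0 (depending only on ω) such that for every smooth 2πω-periodic function f : ℝ → ℝ with zero mean over one period one has 4∫₀^{2πω} f''(θ)² dθ − 10∫₀^{2πω} f'(θ)² dθ + 8∫₀^{2πω} f(θ)² dθ ≥ (7/4 + δ) ∫₀^{2πω} f(θ)² dθ. -/
open Real

open MeasureTheory Complex AddCircle ENNReal intervalIntegral in
lemma parseval_aux {T : ℝ} [hT : Fact (0 < T)] {g : ℝ → ℝ} (hg : Continuous g)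
    (hper : ∀ x, g (x + T) = g x) :
    Summable (fun n : ℤ => ‖fourierCoeffOn hT.out (fun x => (g x : ℂ)) n‖ ^ 2) ∧
      T * ∑' n : ℤ, ‖fourierCoeffOn hT.out (fun x => (g x : ℂ)) n‖ ^ 2
        = ∫ x in (0:ℝ)..T, (g x) ^ 2 := by
  have hperc : Function.Periodic (fun x : ℝ => (g x : ℂ)) T := fun x => by
    simp [hper x]
  have hGc : Continuous hperc.lift :=
    Continuous.quotient_liftOn' (Complex.continuous_ofReal.comp hg) _
  set G : C(AddCircle T, ℂ) := ⟨hperc.lift, hGc⟩ with hG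
  have hcoeff : ∀ n : ℤ, fourierCoeff (⇑G) n = fourierCoeffOn hT.out (fun x => (g x : ℂ)) n := by
    intro n
    rw [fourierCoeff_eq_intervalIntegral _ n 0, fourierCoeffOn_eq_integral]
    simp only [zero_add, sub_zero]
    congr 1
    apply intervalIntegral.integral_congr
    intro x _
    simp [hG]
  have hL : ∀ n : ℤ, fourierCoeff (⇑(ContinuousMap.toLp (E := ℂ) 2 haarAddCircle ℂ G)) n
      = fourierCoeffOn hT.out (fun x => (g x : ℂ)) n := by
    intro n; rw [fourierCoeff_toLp]; exact hcoeff n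
  constructor
  · have hs := ((fourierBasis (T := T)).repr
      (ContinuousMap.toLp (E := ℂ) 2 haarAddCircle ℂ G)).prop.summable (by norm_num)
    have : (fun i : ℤ => ‖(fourierBasis (T := T)).repr
        (ContinuousMap.toLp (E := ℂ) 2 haarAddCircle ℂ G) i‖ ^ (2:ℝ≥0∞).toReal)
        = fun n : ℤ => ‖fourierCoeffOn hT.out (fun x => (g x : ℂ)) n‖ ^ 2 := by
      funext n
      rw [fourierBasis_repr, hL n, ENNReal.toReal_ofNat]
      rw [show ((2:ℝ)) = ((2:ℕ):ℝ) by norm_num, Real.rpow_natCast]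
    rwa [this] at hs
  · have hpars := tsum_sq_fourierCoeff (ContinuousMap.toLp (E := ℂ) 2 haarAddCircle ℂ G)
    simp_rw [hL] at hpars
    rw [hpars]
    have hae : ∫ t : AddCircle T, ‖(ContinuousMap.toLp (E := ℂ) 2 haarAddCircle ℂ G) t‖ ^ 2 ∂haarAddCircle
        = ∫ t : AddCircle T, ‖G t‖ ^ 2 ∂haarAddCircle := by
      apply MeasureTheory.integral_congr_ae
      filter_upwards [ContinuousMap.coeFn_toLp (p := 2) (μ := haarAddCircle) (𝕜 := ℂ) G] with t ht
      rw [ht]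
    rw [hae]
    have hvol : ∫ t : AddCircle T, ‖G t‖ ^ 2 = T * ∫ t : AddCircle T, ‖G t‖ ^ 2 ∂haarAddCircle := by
      rw [volume_eq_smul_haarAddCircle, MeasureTheory.integral_smul_measure, ENNReal.toReal_ofReal hT.out.le,
        smul_eq_mul]
    rw [← hvol, ← AddCircle.intervalIntegral_preimage T 0]
    rw [zero_add]
    apply intervalIntegral.integral_congr
    intro x _
    simp only [hG, ContinuousMap.coe_mk, Function.Periodic.lift_coe]
    rw [Complex.norm_real, Real.norm_eq_abs, _root_.sq_abs]

open MeasureTheory Complex AddCircle ENNReal intervalIntegral in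
lemma coeff_deriv_aux {T : ℝ} [hT : Fact (0 < T)] {g : ℝ → ℝ} (hg : Differentiable ℝ g)
    (hg' : Continuous (deriv g)) (hper : ∀ x, g (x + T) = g x) (n : ℤ) :
    fourierCoeffOn hT.out (fun x => ((deriv g x : ℝ) : ℂ)) n
      = (2 * π * Complex.I * n / T) * fourierCoeffOn hT.out (fun x => (g x : ℂ)) n := by
  have hgT : g T = g 0 := by simpa using hper 0
  rcases eq_or_ne n 0 with rfl | hn
  · simp only [Int.cast_zero, mul_zero, zero_div, zero_mul]
    rw [fourierCoeffOn_eq_integral]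
    simp only [neg_zero, fourier_zero, one_smul]
    rw [intervalIntegral.integral_ofReal,
      intervalIntegral.integral_deriv_eq_sub (fun x _ => hg x) (hg'.intervalIntegrable _ _)]
    rw [hgT]
    simp
  · have key := fourierCoeffOn_of_hasDerivAt hT.out hn
      (f := fun x => (g x : ℂ)) (f' := fun x => ((deriv g x : ℝ) : ℂ))
      (fun x _ => (hg x).hasDerivAt.ofReal_comp)
      ((Complex.continuous_ofReal.comp hg').intervalIntegrable _ _)
    beta_reduce at key
    rw [hgT] at key
    simp only [sub_self, mul_zero, zero_sub, sub_zero] at key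
    have hn' : (n : ℂ) ≠ 0 := Int.cast_ne_zero.mpr hn
    have hπ : (π : ℂ) ≠ 0 := Complex.ofReal_ne_zero.mpr Real.pi_ne_zero
    have hT' : (T : ℂ) ≠ 0 := Complex.ofReal_ne_zero.mpr hT.out.ne'
    have hI : (Complex.I : ℂ) ≠ 0 := Complex.I_ne_zero
    have ha : (2 * (π:ℂ) * Complex.I * (n:ℂ)) ≠ 0 := by
      exact mul_ne_zero (mul_ne_zero (mul_ne_zero two_ne_zero hπ) hI) hn'
    have gen : ∀ (a X : ℂ), a ≠ 0 → X = a / (T:ℂ) * (1 / (-a) * -(((T:ℂ) - 0) * X)) := by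
      intro a X ha0
      field_simp
      ring
    rw [key, show (-2 * (π:ℂ) * Complex.I * (n:ℂ)) = -(2 * (π:ℂ) * Complex.I * (n:ℂ)) by ring]
    exact gen _ _ ha

lemma four_sq_ne (ω : ℕ) (hω : 1 ≤ ω) (n : ℤ) : 4 * n ^ 2 - 5 * (ω : ℤ) ^ 2 ≠ 0 := by
  intro h
  have hωR : (0:ℝ) < (ω:ℝ) := by exact_mod_cast hω
  have hR : 4 * (n:ℝ) ^ 2 = 5 * (ω:ℝ) ^ 2 := by
    have h' : 4 * n ^ 2 = 5 * (ω:ℤ) ^ 2 := by linarith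
    exact_mod_cast h'
  have hsq : (2 * (n:ℝ) / ω) ^ 2 = 5 := by
    field_simp
    linarith
  have h5 : Irrational (Real.sqrt 5) := by
    have hp : Nat.Prime 5 := by norm_num
    simpa using hp.irrational_sqrt
  apply h5
  refine ⟨|2 * (n:ℚ) / ω|, ?_⟩
  have hcast : ((|2 * (n:ℚ) / ω| : ℚ) : ℝ) = |2 * (n:ℝ) / ω| := by
    push_cast
    ring_nf
  rw [hcast, ← Real.sqrt_sq_eq_abs, hsq]

lemma bracket_nonneg (ω : ℕ) (hω : 1 ≤ ω) (n : ℤ) :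
    0 ≤ 4 * ((n:ℝ)^2/(ω:ℝ)^2)^2 - 10 * ((n:ℝ)^2/(ω:ℝ)^2) + (25/4 - 1/(4*(ω:ℝ)^4)) := by
  have hωR : (0:ℝ) < (ω:ℝ) := by exact_mod_cast hω
  have h1 : (1:ℤ) ≤ (4 * n ^ 2 - 5 * (ω:ℤ) ^ 2) ^ 2 := by
    nlinarith [Int.one_le_abs (four_sq_ne ω hω n), sq_abs (4 * n ^ 2 - 5 * (ω:ℤ) ^ 2),
      abs_nonneg (4 * n ^ 2 - 5 * (ω:ℤ) ^ 2)]
  have h1R : (1:ℝ) ≤ (4 * (n:ℝ) ^ 2 - 5 * (ω:ℝ) ^ 2) ^ 2 := by exact_mod_cast h1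
  have e : 4 * ((n:ℝ)^2/(ω:ℝ)^2)^2 - 10 * ((n:ℝ)^2/(ω:ℝ)^2) + (25/4 - 1/(4*(ω:ℝ)^4))
      = ((4 * (n:ℝ) ^ 2 - 5 * (ω:ℝ) ^ 2) ^ 2 - 1) / (4 * (ω:ℝ)^4) := by
    field_simp
    ring
  rw [e]
  apply div_nonneg (by linarith) (by positivity)

/-- Improved coercivity with spectral-gap constant `δ = δ(ω) > 0`. -/
theorem stmt_1 (ω : ℕ) (hω : 1 ≤ ω) :
    ∃ δ : ℝ, 0 < δ ∧
      ∀ f : ℝ → ℝ, ContDiff ℝ (⊤ : ℕ∞) f →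
        (∀ θ : ℝ, f (θ + 2 * π * ω) = f θ) →
        (∫ θ in (0:ℝ)..(2 * π * ω), f θ) = 0 →
        4 * (∫ θ in (0:ℝ)..(2 * π * ω), (deriv (deriv f) θ) ^ 2)
          - 10 * (∫ θ in (0:ℝ)..(2 * π * ω), (deriv f θ) ^ 2)
          + 8 * (∫ θ in (0:ℝ)..(2 * π * ω), (f θ) ^ 2)
          ≥ (7 / 4 + δ) * ∫ θ in (0:ℝ)..(2 * π * ω), (f θ) ^ 2 := by
  have hωR : (0:ℝ) < (ω:ℝ) := by exact_mod_cast hω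
  refine ⟨1 / (4 * (ω:ℝ)^4), by positivity, ?_⟩
  intro f hf hper _hmean
  have hπ := Real.pi_pos
  have hT0 : (0:ℝ) < 2 * π * ω := by positivity
  haveI hfact : Fact ((0:ℝ) < 2 * π * ω) := ⟨hT0⟩
  have hfinf : ContDiff ℝ ((⊤ : ℕ∞) : WithTop ℕ∞) f := hf.of_le (by simp)
  have hd : Differentiable ℝ f := hfinf.differentiable (by norm_num)
  have hf1 : ContDiff ℝ ((⊤ : ℕ∞) : WithTop ℕ∞) (deriv f) := (contDiff_infty_iff_deriv.mp hfinf).2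
  have hd1 : Differentiable ℝ (deriv f) := hf1.differentiable (by norm_num)
  have hf2 : ContDiff ℝ ((⊤ : ℕ∞) : WithTop ℕ∞) (deriv (deriv f)) := (contDiff_infty_iff_deriv.mp hf1).2
  have hper1 : ∀ x, deriv f (x + 2*π*ω) = deriv f x := by
    intro x
    have h' : deriv (fun y => f (y + 2*π*ω)) x = deriv f x := by
      congr 1
      funext y
      exact hper y
    rw [← h', deriv_comp_add_const]
  have hper2 : ∀ x, deriv (deriv f) (x + 2*π*ω) = deriv (deriv f) x := by
    intro x
    have h' : deriv (fun y => deriv f (y + 2*π*ω)) x = deriv (deriv f) x := by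
      congr 1
      funext y
      exact hper1 y
    rw [← h', deriv_comp_add_const]
  obtain ⟨S0, E0⟩ := parseval_aux (T := 2*π*ω) hfinf.continuous hper
  obtain ⟨S1, E1⟩ := parseval_aux (T := 2*π*ω) hf1.continuous hper1
  obtain ⟨S2, E2⟩ := parseval_aux (T := 2*π*ω) hf2.continuous hper2
  set c0 : ℤ → ℂ := fun n => fourierCoeffOn hfact.out (fun x => ((f x : ℝ) : ℂ)) n with hc0
  set c1 : ℤ → ℂ := fun n => fourierCoeffOn hfact.out (fun x => ((deriv f x : ℝ) : ℂ)) n with hc1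
  set c2 : ℤ → ℂ := fun n => fourierCoeffOn hfact.out (fun x => ((deriv (deriv f) x : ℝ) : ℂ)) n with hc2
  have hmul : ∀ n : ℤ, ‖(2 * (π:ℂ) * Complex.I * (n:ℂ) / ((2 * π * (ω:ℝ) : ℝ) : ℂ))‖ ^ 2
      = (n:ℝ)^2 / (ω:ℝ)^2 := by
    intro n
    have hfac : (2 * (π:ℂ) * Complex.I * (n:ℂ) / ((2 * π * (ω:ℝ) : ℝ) : ℂ))
        = (n:ℂ) / (ω:ℂ) * Complex.I := by
      have hπ' : (π:ℂ) ≠ 0 := Complex.ofReal_ne_zero.mpr Real.pi_ne_zero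
      have hω' : ((ω:ℕ):ℂ) ≠ 0 := Nat.cast_ne_zero.mpr (by exact_mod_cast hωR.ne')
      have hD : ((2 * π * (ω:ℝ) : ℝ) : ℂ) = 2 * (π:ℂ) * (ω:ℂ) := by push_cast; ring
      rw [hD, div_eq_iff (mul_ne_zero (mul_ne_zero two_ne_zero hπ') hω'),
        div_mul_eq_mul_div, div_mul_eq_mul_div, eq_div_iff hω']
      ring
    rw [hfac]
    rw [norm_mul, Complex.norm_I, mul_one, norm_div]
    rw [Complex.norm_intCast, Complex.norm_natCast]
    rw [div_pow, sq_abs]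
  have hrel1 : ∀ n : ℤ, ‖c1 n‖ ^ 2 = (n:ℝ)^2/(ω:ℝ)^2 * ‖c0 n‖ ^ 2 := by
    intro n
    have h := coeff_deriv_aux (T := 2*π*ω) hd hf1.continuous hper n
    rw [show c1 n = fourierCoeffOn hfact.out (fun x => ((deriv f x : ℝ) : ℂ)) n from rfl, h,
      norm_mul, mul_pow, hmul n]
  have hrel2 : ∀ n : ℤ, ‖c2 n‖ ^ 2 = ((n:ℝ)^2/(ω:ℝ)^2)^2 * ‖c0 n‖ ^ 2 := by
    intro n
    have h := coeff_deriv_aux (T := 2*π*ω) hd1 hf2.continuous hper1 n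
    have h2 : ‖c2 n‖ ^ 2 = (n:ℝ)^2/(ω:ℝ)^2 * ‖c1 n‖ ^ 2 := by
      rw [show c2 n = fourierCoeffOn hfact.out (fun x => ((deriv (deriv f) x : ℝ) : ℂ)) n from rfl,
        h, norm_mul, mul_pow, hmul n]
    rw [h2, hrel1 n]
    ring
  set a : ℤ → ℝ := fun n => ‖c0 n‖ ^ 2 with ha
  have S1' : Summable (fun n : ℤ => (n:ℝ)^2/(ω:ℝ)^2 * a n) := S1.congr hrel1
  have S2' : Summable (fun n : ℤ => ((n:ℝ)^2/(ω:ℝ)^2)^2 * a n) := S2.congr hrel2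
  have hSeq1 : ∑' n : ℤ, ‖c1 n‖ ^ 2 = ∑' n : ℤ, (n:ℝ)^2/(ω:ℝ)^2 * a n := tsum_congr hrel1
  have hSeq2 : ∑' n : ℤ, ‖c2 n‖ ^ 2 = ∑' n : ℤ, ((n:ℝ)^2/(ω:ℝ)^2)^2 * a n := tsum_congr hrel2
  have key : 0 ≤ 4 * (∑' n : ℤ, ((n:ℝ)^2/(ω:ℝ)^2)^2 * a n)
      - 10 * (∑' n : ℤ, (n:ℝ)^2/(ω:ℝ)^2 * a n)
      + (25/4 - 1/(4*(ω:ℝ)^4)) * (∑' n : ℤ, a n) := by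
    rw [← tsum_mul_left, ← tsum_mul_left, ← tsum_mul_left,
      ← Summable.tsum_sub (S2'.mul_left 4) (S1'.mul_left 10),
      ← Summable.tsum_add ((S2'.mul_left 4).sub (S1'.mul_left 10)) (S0.mul_left _)]
    apply tsum_nonneg
    intro n
    have hbr := bracket_nonneg ω hω n
    have han : (0:ℝ) ≤ a n := by positivity
    nlinarith [mul_nonneg hbr han]
  rw [ge_iff_le, ← E0, ← E1, ← E2, hSeq1, hSeq2]
  nlinarith [mul_nonneg hT0.le key]
end

section
/- Let C > 0 and let e : [0,∞) → ℝ be differentiable with e(t) > 0 for all t ≥ 0 and satisfy the differential inequality e'(t) ≤ −(7/4) e(t) + C e(t)² for all t ≥ 0. If e(0) ≤ min{1, 7/(8C)}, then e(t) ≤ 2 e(0) e^{−(7/4)t} for all t ≥ 0. -/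
/-- ODE comparison: a positive differentiable function satisfying
`e' ≤ −(7/4)e + Ce²` with small initial data decays at rate `7/4`
with doubled constant. -/
theorem stmt_4 (C : ℝ) (hC : 0 < C) (e : ℝ → ℝ)
    (hdiff : ∀ t : ℝ, 0 ≤ t → DifferentiableAt ℝ e t)
    (hpos : ∀ t : ℝ, 0 ≤ t → 0 < e t)
    (hineq : ∀ t : ℝ, 0 ≤ t → deriv e t ≤ -(7 / 4) * e t + C * (e t) ^ 2)
    (h0 : e 0 ≤ min 1 (7 / (8 * C))) :
    ∀ t : ℝ, 0 ≤ t → e t ≤ 2 * e 0 * Real.exp (-(7 / 4) * t) := by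
  have he0 : 0 < e 0 := hpos 0 le_rfl
  set F : ℝ → ℝ := fun t =>
    (e t * Real.exp ((7 / 4) * t))⁻¹ +
      (4 * C / 7) * (1 - Real.exp (-(7 / 4) * t)) with hFdef
  -- F has derivative computation
  have hmono : MonotoneOn F (Set.Ici (0:ℝ)) := by
    apply monotoneOn_of_deriv_nonneg (convex_Ici 0)
    · apply ContinuousOn.add
      · apply ContinuousOn.inv₀
        · exact ContinuousOn.mul
            (fun t ht => ((hdiff t ht).continuousAt).continuousWithinAt)
            ((Real.continuous_exp.comp (continuous_const.mul continuous_id)).continuousOn)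
        · intro t ht
          exact (mul_pos (hpos t ht) (Real.exp_pos _)).ne'
      · exact (continuous_const.mul (continuous_const.sub
          (Real.continuous_exp.comp (continuous_const.mul continuous_id)))).continuousOn
    · intro t ht
      rw [interior_Ici] at ht
      have hte : (0:ℝ) ≤ t := le_of_lt ht
      have hne : e t * Real.exp ((7 / 4) * t) ≠ 0 :=
        (mul_pos (hpos t hte) (Real.exp_pos _)).ne'
      exact (((((hdiff t hte).mul
        ((Real.differentiable_exp.differentiableAt).comp t
          ((differentiable_const _).differentiableAt.mul differentiableAt_id))).inv hne).add
        (((differentiableAt_const _).sub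
          (((differentiableAt_const _).mul differentiableAt_id).exp)).const_mul _))).differentiableWithinAt
    · intro t ht
      rw [interior_Ici] at ht
      have hte : (0:ℝ) ≤ t := le_of_lt ht
      set E := Real.exp ((7 / 4) * t) with hE
      have hEpos : 0 < E := Real.exp_pos _
      have hepos := hpos t hte
      have hne : e t * E ≠ 0 := (mul_pos hepos hEpos).ne'
      have hfE : HasDerivAt (fun s => Real.exp ((7 / 4) * s)) (E * (7 / 4)) t := by
        simpa using ((hasDerivAt_id t).const_mul (7/4)).exp
      have hf : HasDerivAt (fun s => e s * Real.exp ((7 / 4) * s))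
          (deriv e t * E + e t * (E * (7 / 4))) t :=
        ((hdiff t hte).hasDerivAt).mul hfE
      have hinv : HasDerivAt (fun s => (e s * Real.exp ((7 / 4) * s))⁻¹)
          (-(deriv e t * E + e t * (E * (7 / 4))) / (e t * E) ^ 2) t := hf.inv hne
      have hg : HasDerivAt (fun s => (4 * C / 7) * (1 - Real.exp (-(7 / 4) * s)))
          ((4 * C / 7) * (0 - Real.exp (-(7 / 4) * t) * (-(7 / 4)))) t := by
        simpa using (((hasDerivAt_const t (1:ℝ)).sub
          (((hasDerivAt_id t).const_mul (-(7/4))).exp)).const_mul (4 * C / 7))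
      have hF : HasDerivAt F
          (-(deriv e t * E + e t * (E * (7 / 4))) / (e t * E) ^ 2 +
            (4 * C / 7) * (0 - Real.exp (-(7 / 4) * t) * (-(7 / 4)))) t := hinv.add hg
      rw [hF.deriv]
      have hexpneg : Real.exp (-(7 / 4) * t) = E⁻¹ := by
        rw [hE, ← Real.exp_neg]; ring_nf
      have key : deriv e t + (7 / 4) * e t ≤ C * (e t) ^ 2 := by
        have := hineq t hte; linarith
      have heq : -(deriv e t * E + e t * (E * (7 / 4))) / (e t * E) ^ 2 +
            (4 * C / 7) * (0 - Real.exp (-(7 / 4) * t) * (-(7 / 4)))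
          = (C * (e t) ^ 2 - (deriv e t + (7 / 4) * e t)) / ((e t) ^ 2 * E) := by
        rw [hexpneg]
        field_simp
        ring
      rw [heq]
      apply div_nonneg (by linarith) (by positivity)
  -- use monotonicity
  intro t ht
  have hFt := hmono (Set.self_mem_Ici) (Set.mem_Ici.2 ht) ht
  have hE0 : Real.exp ((7 / 4) * (0:ℝ)) = 1 := by norm_num
  have hEn0 : Real.exp (-(7 / 4) * (0:ℝ)) = 1 := by norm_num
  have hF0 : F 0 = (e 0)⁻¹ := by
    simp [hFdef, hE0, hEn0]
  set E := Real.exp ((7 / 4) * t) with hE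
  have hEpos : 0 < E := Real.exp_pos _
  have hepos := hpos t ht
  have hFt' : (e 0)⁻¹ ≤ (e t * E)⁻¹ + (4 * C / 7) * (1 - Real.exp (-(7 / 4) * t)) := by
    rw [← hF0]; exact hFt
  have hsmall : e 0 ≤ 7 / (8 * C) := le_trans h0 (min_le_right _ _)
  have hCbound : 4 * C / 7 ≤ (2 * e 0)⁻¹ := by
    have h8 : e 0 * (8 * C) ≤ 7 := (le_div_iff₀ (by positivity)).1 hsmall
    rw [inv_eq_one_div, div_le_div_iff₀ (by norm_num) (by positivity)]
    nlinarith
  have hexppos : 0 < Real.exp (-(7 / 4) * t) := Real.exp_pos _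
  have hterm : (4 * C / 7) * (1 - Real.exp (-(7 / 4) * t)) ≤ 4 * C / 7 := by
    nlinarith
  have hhalf : ((e 0)⁻¹ : ℝ) = 2 * (2 * e 0)⁻¹ := by
    field_simp
  have h1 : (2 * e 0)⁻¹ ≤ (e t * E)⁻¹ := by
    rw [hhalf] at hFt'
    linarith
  have h2 : e t * E ≤ 2 * e 0 := by
    have h2e : (0:ℝ) < (2 * e 0)⁻¹ := by positivity
    have := inv_anti₀ h2e h1
    rwa [inv_inv, inv_inv] at this
  have hexpneg : Real.exp (-(7 / 4) * t) = E⁻¹ := by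
    rw [hE, ← Real.exp_neg]; ring_nf
  rw [hexpneg]
  calc e t = (e t * E) * E⁻¹ := by field_simp
    _ ≤ (2 * e 0) * E⁻¹ := by
        apply mul_le_mul_of_nonneg_right h2 (by positivity)
    _ = 2 * e 0 * E⁻¹ := by ring
end

section
/- Let γ : ℝ → ℝ² be a smooth L-periodic curve (L > 0) parametrized by arclength, with unit tangent T = γ', unit normal ν obtained by rotating T by +π/2, and curvature scalar k defined by γ'' = k ν. Then ∫₀^L (2k''(s) + k(s)³) ⟨γ(s), ν(s)⟩ ds = −∫₀^L k(s)² ds. -/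
open Real
open scoped RealInnerProductSpace

/-- The key geometric identity `∫ (2k'' + k³)(γ·ν) ds = −∫ k² ds` for a smooth
closed arclength-parametrized plane curve. -/
theorem stmt_6 (L : ℝ) (hL : 0 < L)
    (γ ν : ℝ → EuclideanSpace ℝ (Fin 2)) (k : ℝ → ℝ)
    (hγ : ContDiff ℝ (⊤ : ℕ∞) γ)
    (hper : ∀ s : ℝ, γ (s + L) = γ s)
    (hunit : ∀ s : ℝ, ‖deriv γ s‖ = 1)
    (hν0 : ∀ s : ℝ, ν s 0 = -(deriv γ s 1))
    (hν1 : ∀ s : ℝ, ν s 1 = deriv γ s 0)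
    (hk : ∀ s : ℝ, deriv (deriv γ) s = k s • ν s) :
    (∫ s in (0:ℝ)..L, (2 * deriv (deriv k) s + k s ^ 3) * ⟪γ s, ν s⟫) =
      -∫ s in (0:ℝ)..L, k s ^ 2 := by
  set T : ℝ → EuclideanSpace ℝ (Fin 2) := deriv γ with hTdef
  have hle : ((⊤ : ℕ∞) : WithTop ℕ∞) ≠ 0 := by simp
  have hγ2 : ContDiff ℝ (⊤ : ℕ∞) γ := hγ.of_le (by simp)
  have hγd : Differentiable ℝ γ := hγ2.differentiable hle
  have hT : ContDiff ℝ (⊤ : ℕ∞) T := (contDiff_infty_iff_deriv.mp hγ2).2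
  have hTd : Differentiable ℝ T := hT.differentiable hle
  -- coordinate derivatives of γ
  have hγi : ∀ (i : Fin 2) (s : ℝ), HasDerivAt (fun u => γ u i) (T s i) s := by
    intro i s
    have h2 := (EuclideanSpace.proj (𝕜 := ℝ) i).hasFDerivAt.comp_hasDerivAt s (hγd s).hasDerivAt
    exact h2
  -- coordinate derivatives of T
  have hTi : ∀ (i : Fin 2) (s : ℝ), HasDerivAt (fun u => T u i) (k s * ν s i) s := by
    intro i s
    have h2 := (EuclideanSpace.proj (𝕜 := ℝ) i).hasFDerivAt.comp_hasDerivAt s (hTd s).hasDerivAt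
    rw [show deriv T s = k s • ν s from hk s] at h2
    exact h2
  have hT0' : ∀ s, HasDerivAt (fun u => T u 0) (-(k s * T s 1)) s := by
    intro s
    have := hTi 0 s
    rw [hν0 s] at this
    simpa using this
  have hT1' : ∀ s, HasDerivAt (fun u => T u 1) (k s * T s 0) s := by
    intro s
    have := hTi 1 s
    rwa [hν1 s] at this
  -- unit speed
  have hTT : ∀ s, T s 0 ^ 2 + T s 1 ^ 2 = 1 := by
    intro s
    have h : ‖T s‖ ^ 2 = 1 := by rw [hunit s]; norm_num
    rw [EuclideanSpace.norm_eq, Real.sq_sqrt (by positivity)] at h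
    simpa [Fin.sum_univ_two, sq_abs] using h
  -- formula for k, smoothness of k
  have hkK : k = fun s => T s 0 * deriv (fun u => T u 1) s
      - T s 1 * deriv (fun u => T u 0) s := by
    funext s
    rw [(hT1' s).deriv, (hT0' s).deriv]
    linear_combination (-(k s)) * hTT s
  have hTi_cd : ∀ i : Fin 2, ContDiff ℝ (⊤ : ℕ∞) (fun s => T s i) := fun i =>
    contDiff_euclidean.mp hT i
  have hkc : ContDiff ℝ (⊤ : ℕ∞) k := by
    rw [hkK]
    exact ((hTi_cd 0).mul (contDiff_infty_iff_deriv.mp (hTi_cd 1)).2).sub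
      ((hTi_cd 1).mul (contDiff_infty_iff_deriv.mp (hTi_cd 0)).2)
  have hk'c : ContDiff ℝ (⊤ : ℕ∞) (deriv k) := (contDiff_infty_iff_deriv.mp hkc).2
  have hk''c : ContDiff ℝ (⊤ : ℕ∞) (deriv (deriv k)) := (contDiff_infty_iff_deriv.mp hk'c).2
  have hk'at : ∀ s, HasDerivAt k (deriv k s) s := fun s =>
    (hkc.differentiable hle s).hasDerivAt
  have hk''at : ∀ s, HasDerivAt (deriv k) (deriv (deriv k) s) s := fun s =>
    (hk'c.differentiable hle s).hasDerivAt
  -- the scalar functions p = ⟨γ, ν⟩ and q = ⟨γ, T⟩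
  set p : ℝ → ℝ := fun s => γ s 1 * T s 0 - γ s 0 * T s 1 with hpdef
  set q : ℝ → ℝ := fun s => γ s 0 * T s 0 + γ s 1 * T s 1 with hqdef
  have hp' : ∀ s, HasDerivAt p (-(k s) * q s) s := by
    intro s
    have h := ((hγi 1 s).mul (hT0' s)).sub ((hγi 0 s).mul (hT1' s))
    refine h.congr_deriv (Eq.symm ?_)
    simp only [hqdef]
    ring
  have hq' : ∀ s, HasDerivAt q (1 + k s * p s) s := by
    intro s
    have h := ((hγi 0 s).mul (hT0' s)).add ((hγi 1 s).mul (hT1' s))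
    refine h.congr_deriv (Eq.symm ?_)
    simp only [hpdef]
    linear_combination (-1 : ℝ) * hTT s
  -- the antiderivative F
  set F : ℝ → ℝ := fun s => 2 * deriv k s * p s + k s ^ 2 * q s with hFdef
  have hF : ∀ s, HasDerivAt F ((2 * deriv (deriv k) s + k s ^ 3) * p s + k s ^ 2) s := by
    intro s
    have h1 := ((hk''at s).const_mul 2).mul (hp' s)
    have h2 := ((hk'at s).pow 2).mul (hq' s)
    have h := h1.add h2
    refine h.congr_deriv (Eq.symm ?_)
    simp only [Pi.pow_apply]
    ring
  -- periodicity
  have hTper : ∀ s, T (s + L) = T s := by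
    intro s
    have h : (fun x => γ (x + L)) = γ := funext hper
    rw [hTdef, ← deriv_comp_add_const, h]
  have hderper : ∀ f : ℝ → ℝ, (∀ s, f (s + L) = f s) →
      ∀ s, deriv f (s + L) = deriv f s := by
    intro f hf s
    conv_lhs => rw [← deriv_comp_add_const]
    rw [funext hf]
  have hkper : ∀ s, k (s + L) = k s := by
    intro s
    rw [congrFun hkK (s + L), congrFun hkK s,
      hderper _ (fun u => by rw [hTper u]) s, hderper _ (fun u => by rw [hTper u]) s,
      hTper s]
  have hk'per : ∀ s, deriv k (s + L) = deriv k s := hderper k hkper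
  have hpper : ∀ s, p (s + L) = p s := by
    intro s; simp only [hpdef, hper s, hTper s]
  have hqper : ∀ s, q (s + L) = q s := by
    intro s; simp only [hqdef, hper s, hTper s]
  have hFper : F L = F 0 := by
    have h : F (0 + L) = F 0 := by
      simp only [hFdef, hk'per 0, hkper 0, hpper 0, hqper 0]
    rwa [zero_add] at h
  -- the integral of the exact derivative vanishes
  have hcontp : Continuous p := by
    have h0 := (contDiff_euclidean.mp hγ2 0).continuous
    have h1 := (contDiff_euclidean.mp hγ2 1).continuous
    exact ((h1.mul (hTi_cd 0).continuous).sub (h0.mul (hTi_cd 1).continuous))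
  have hcontg : Continuous (fun s => (2 * deriv (deriv k) s + k s ^ 3) * p s + k s ^ 2) := by
    exact ((continuous_const.mul hk''c.continuous).add
      (hkc.continuous.pow 3)).mul hcontp |>.add (hkc.continuous.pow 2)
  have hint : IntervalIntegrable
      (fun s => (2 * deriv (deriv k) s + k s ^ 3) * p s + k s ^ 2) MeasureTheory.volume 0 L :=
    hcontg.intervalIntegrable 0 L
  have hintk2 : IntervalIntegrable (fun s => k s ^ 2) MeasureTheory.volume 0 L :=
    ((hkc.continuous).pow 2).intervalIntegrable 0 L
  have h0 : (∫ s in (0:ℝ)..L, ((2 * deriv (deriv k) s + k s ^ 3) * p s + k s ^ 2)) = 0 := by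
    rw [intervalIntegral.integral_eq_sub_of_hasDerivAt (fun s _ => hF s) hint, hFper, sub_self]
  -- rewrite the inner product
  have hinner : ∀ s, (⟪γ s, ν s⟫ : ℝ) = p s := by
    intro s
    simp only [PiLp.inner_apply, RCLike.inner_apply, conj_trivial, Fin.sum_univ_two,
      hν0 s, hν1 s, hpdef]
    ring
  have hcalc : (∫ s in (0:ℝ)..L, (2 * deriv (deriv k) s + k s ^ 3) * ⟪γ s, ν s⟫)
      = ∫ s in (0:ℝ)..L, (((2 * deriv (deriv k) s + k s ^ 3) * p s + k s ^ 2) - k s ^ 2) := by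
    apply intervalIntegral.integral_congr
    intro s _
    simp only [hinner]
    ring
  rw [hcalc, intervalIntegral.integral_sub hint hintk2, h0, zero_sub]
end

section
/- There exists a universal constant C > 0 such that for every L > 0, every smooth L-periodic function f : ℝ → ℝ with zero mean over one period, and every η ∈ (0,1], setting e = ∫₀^L f(s)² ds, one has ∫₀^L |f(s)|³ ds ≤ C ( η^{1/2} e (∫₀^L f''(s)² ds)^{1/2} + η^{−1/2} e^{3/2} ). -/
open MeasureTheory intervalIntegral

/-- Cauchy–Schwarz for interval integrals of continuous functions. -/
lemma cs_int {a b : ℝ} (hab : a ≤ b) {g h : ℝ → ℝ} (hg : Continuous g) (hh : Continuous h) :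
    (∫ s in a..b, |g s| * |h s|) ≤
      Real.sqrt (∫ s in a..b, g s ^ 2) * Real.sqrt (∫ s in a..b, h s ^ 2) := by
  set P := ∫ s in a..b, g s ^ 2 with hPdef
  set Q := ∫ s in a..b, h s ^ 2 with hQdef
  set R := ∫ s in a..b, |g s| * |h s| with hRdef
  have hP : 0 ≤ P := intervalIntegral.integral_nonneg hab (fun x _ => sq_nonneg _)
  have hQ : 0 ≤ Q := intervalIntegral.integral_nonneg hab (fun x _ => sq_nonneg _)
  have hR : 0 ≤ R := intervalIntegral.integral_nonneg hab
    (fun x _ => mul_nonneg (abs_nonneg _) (abs_nonneg _))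
  have hiQ : IntervalIntegrable (fun s => h s ^ 2) volume a b :=
    ((hh.pow 2)).intervalIntegrable a b
  have hiP : IntervalIntegrable (fun s => g s ^ 2) volume a b :=
    ((hg.pow 2)).intervalIntegrable a b
  have hiR : IntervalIntegrable (fun s => |g s| * |h s|) volume a b :=
    (hg.abs.mul hh.abs).intervalIntegrable a b
  have key : ∀ t : ℝ, 0 ≤ Q * (t * t) + (-2 * R) * t + P := by
    intro t
    have h1 : (fun s => (t * |h s| - |g s|) ^ 2)
        = fun s => t ^ 2 * h s ^ 2 + (-2 * t) * (|g s| * |h s|) + g s ^ 2 := by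
      funext s
      have h2 := sq_abs (h s); have h3 := sq_abs (g s)
      nlinarith [sq_nonneg (t * |h s| - |g s|)]
    have h0 : 0 ≤ ∫ s in a..b, (t * |h s| - |g s|) ^ 2 :=
      intervalIntegral.integral_nonneg hab (fun x _ => sq_nonneg _)
    rw [h1] at h0
    rw [intervalIntegral.integral_add (((hiQ.const_mul _).add (hiR.const_mul _))) hiP,
      intervalIntegral.integral_add (hiQ.const_mul _) (hiR.const_mul _),
      intervalIntegral.integral_const_mul, intervalIntegral.integral_const_mul] at h0
    nlinarith [h0]
  have hd := discrim_le_zero key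
  rw [discrim] at hd
  have hRQ : R ^ 2 ≤ P * Q := by nlinarith
  rw [← Real.sqrt_mul hP]
  exact (Real.le_sqrt hR (mul_nonneg hP hQ)).2 hRQ

lemma exists_zero {L : ℝ} (hL : 0 < L) {f : ℝ → ℝ} (hfc : Continuous f)
    (hmean : (∫ s in (0:ℝ)..L, f s) = 0) : ∃ c ∈ Set.Icc (0:ℝ) L, f c = 0 := by
  by_contra hcon
  push_neg at hcon
  have hfi : IntervalIntegrable f volume 0 L := hfc.intervalIntegrable 0 L
  have h0 : f 0 ≠ 0 := hcon 0 ⟨le_refl _, hL.le⟩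
  have hsign : ∀ x ∈ Set.Icc (0:ℝ) L, (0 < f x ↔ 0 < f 0) := by
    intro x hx
    by_contra hiff
    -- f x and f 0 have opposite signs, so IVT gives a zero
    have hx0 : f x ≠ 0 := hcon x hx
    have : (0:ℝ) ∈ Set.uIcc (f 0) (f x) := by
      rcases lt_or_gt_of_ne h0 with h|h <;> rcases lt_or_gt_of_ne hx0 with h'|h'
      · exact absurd (iff_of_false (not_lt.2 h'.le) (not_lt.2 h.le)) hiff
      · exact Set.mem_uIcc.2 (Or.inl ⟨h.le, h'.le⟩)
      · exact Set.mem_uIcc.2 (Or.inr ⟨h'.le, h.le⟩)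
      · exact absurd (iff_of_true h' h) hiff
    obtain ⟨c, hc, hc0⟩ := intermediate_value_uIcc (hfc.continuousOn (s := Set.uIcc 0 x)) this
    have hsub : Set.uIcc (0:ℝ) x ⊆ Set.Icc (0:ℝ) L := by
      rw [Set.uIcc_of_le hx.1]
      exact Set.Icc_subset_Icc le_rfl hx.2
    have : c ∈ Set.Icc (0:ℝ) L := hsub hc
    exact hcon c this hc0
  rcases lt_or_gt_of_ne h0 with hneg|hpos
  · have : 0 < ∫ s in (0:ℝ)..L, -f s := by
      apply intervalIntegral_pos_of_pos_on (hfc.neg.intervalIntegrable 0 L) _ hL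
      intro x hx
      have hx' : x ∈ Set.Icc (0:ℝ) L := ⟨hx.1.le, hx.2.le⟩
      have := hsign x hx'
      have hfx : f x ≠ 0 := hcon x hx'
      rcases lt_or_gt_of_ne hfx with h|h
      · show 0 < -f x; linarith
      · exact absurd ((this).1 h) (not_lt.2 hneg.le)
    rw [intervalIntegral.integral_neg, hmean] at this
    linarith
  · have : 0 < ∫ s in (0:ℝ)..L, f s := by
      apply intervalIntegral_pos_of_pos_on hfi _ hL
      intro x hx
      exact (hsign x ⟨hx.1.le, hx.2.le⟩).2 hpos
    rw [hmean] at this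
    linarith

lemma sup_bound {F a b d η : ℝ} (hη : 0 < η) (hη1 : η ≤ 1) (ha : 0 ≤ a) (hb : 0 ≤ b)
    (hd : 0 ≤ d) (h2 : F ^ 2 ≤ 2 * (Real.sqrt a * Real.sqrt b))
    (hbd : b ≤ Real.sqrt a * Real.sqrt d) :
    |F| ≤ 2 * (Real.sqrt η * Real.sqrt d + (Real.sqrt η)⁻¹ * Real.sqrt a) := by
  have hsa := Real.sq_sqrt ha
  have hsb := Real.sq_sqrt hb
  have hsd := Real.sq_sqrt hd
  set X := Real.sqrt η * Real.sqrt d with hXdef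
  set Y := (Real.sqrt η)⁻¹ * Real.sqrt a with hYdef
  have hsqη : 0 < Real.sqrt η := Real.sqrt_pos.2 hη
  have hX : 0 ≤ X := mul_nonneg hsqη.le (Real.sqrt_nonneg _)
  have hY : 0 ≤ Y := mul_nonneg (inv_nonneg.2 hsqη.le) (Real.sqrt_nonneg _)
  have h4 : F ^ 4 ≤ 4 * a * b := by
    have h4a : (F ^ 2) ^ 2 ≤ (2 * (Real.sqrt a * Real.sqrt b)) ^ 2 :=
      pow_le_pow_left₀ (sq_nonneg _) h2 2
    calc F ^ 4 = (F ^ 2) ^ 2 := by ring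
      _ ≤ (2 * (Real.sqrt a * Real.sqrt b)) ^ 2 := h4a
      _ = 4 * (Real.sqrt a ^ 2 * Real.sqrt b ^ 2) := by ring
      _ = 4 * a * b := by rw [hsa, hsb]; ring
  have hb2 : b ^ 2 ≤ a * d := by
    have := pow_le_pow_left₀ hb hbd 2
    rwa [mul_pow, hsa, hsd] at this
  have h8 : F ^ 8 ≤ 16 * a ^ 2 * (a * d) := by
    have h8a : (F ^ 4) ^ 2 ≤ (4 * a * b) ^ 2 := pow_le_pow_left₀ (by positivity) h4 2
    calc F ^ 8 = (F ^ 4) ^ 2 := by ring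
      _ ≤ (4 * a * b) ^ 2 := h8a
      _ = 16 * a ^ 2 * b ^ 2 := by ring
      _ ≤ 16 * a ^ 2 * (a * d) := mul_le_mul_of_nonneg_left hb2 (by positivity)
  have hsqa : Real.sqrt a = Real.sqrt η * Y := by rw [hYdef]; field_simp
  have hsqd : Real.sqrt d = X / Real.sqrt η := by rw [hXdef]; field_simp
  have haY : a = η * Y ^ 2 := by
    rw [← hsa, hsqa, mul_pow, Real.sq_sqrt hη.le]
  have hdX : d = X ^ 2 / η := by
    rw [← hsd, hsqd, div_pow, Real.sq_sqrt hη.le]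
  have hkey : 16 * a ^ 2 * (a * d) ≤ (2 * (X + Y)) ^ 8 := by
    have hXY2 : X ^ 2 ≤ (X + Y) ^ 2 := pow_le_pow_left₀ hX (by linarith) 2
    have hXY6 : Y ^ 6 ≤ (X + Y) ^ 6 := pow_le_pow_left₀ hY (by linarith) 6
    have hη2 : η ^ 2 ≤ 1 := by nlinarith
    have h1 : 16 * a ^ 2 * (a * d) = 16 * η ^ 2 * (X ^ 2 * Y ^ 6) := by
      rw [haY, hdX]; field_simp
    have h2' : X ^ 2 * Y ^ 6 ≤ (X + Y) ^ 2 * (X + Y) ^ 6 :=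
      mul_le_mul hXY2 hXY6 (by positivity) (by positivity)
    have h4' : (2 * (X + Y)) ^ 8 = 256 * ((X + Y) ^ 2 * (X + Y) ^ 6) := by ring
    rw [h1, h4']
    have hXYnn : 0 ≤ X ^ 2 * Y ^ 6 := by positivity
    nlinarith [h2', hXYnn]
  have h8' : |F| ^ 8 ≤ (2 * (X + Y)) ^ 8 := by
    rw [← abs_pow]
    calc |F ^ 8| = F ^ 8 := abs_of_nonneg (by positivity)
      _ ≤ 16 * a ^ 2 * (a * d) := h8
      _ ≤ (2 * (X + Y)) ^ 8 := hkey
  exact le_of_pow_le_pow_left₀ (by norm_num) (by positivity) h8'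

/-- Cubic estimate `∫|f|³ ≤ C(η^{1/2} e ‖f''‖_{L²} + η^{−1/2} e^{3/2})`
with `e = ∫f²`, for zero-mean periodic functions. -/
theorem stmt_11 :
    ∃ C : ℝ, 0 < C ∧
      ∀ (L : ℝ), 0 < L →
        ∀ f : ℝ → ℝ, ContDiff ℝ (⊤ : ℕ∞) f →
          (∀ s : ℝ, f (s + L) = f s) →
          (∫ s in (0:ℝ)..L, f s) = 0 →
          ∀ η : ℝ, 0 < η → η ≤ 1 →
            ∀ e : ℝ, e = (∫ s in (0:ℝ)..L, (f s) ^ 2) →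
              (∫ s in (0:ℝ)..L, |f s| ^ 3) ≤
                C * (Real.sqrt η * e *
                      Real.sqrt (∫ s in (0:ℝ)..L, (deriv (deriv f) s) ^ 2)
                    + (Real.sqrt η)⁻¹ * (e * Real.sqrt e)) := by
  refine ⟨2, by norm_num, ?_⟩
  intro L hL f hf hper hmean η hη hη1 e he
  -- regularity
  have hfd : Differentiable ℝ f := hf.differentiable (by simp)
  have hfc : Continuous f := hfd.continuous
  have hftop : ContDiff ℝ ((⊤:ℕ∞):WithTop ℕ∞) f := hf.of_le (by simp)
  have hf1 : ContDiff ℝ ((⊤:ℕ∞):WithTop ℕ∞) (deriv f) := (contDiff_infty_iff_deriv.mp hftop).2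
  have hf'd : Differentiable ℝ (deriv f) := hf1.differentiable (by simp)
  have hf'c : Continuous (deriv f) := hf'd.continuous
  have hf''c : Continuous (deriv (deriv f)) := ((contDiff_infty_iff_deriv.mp hf1).2).continuous
  -- periodicity of the derivative
  have hfun : (fun x => f (x + L)) = f := funext hper
  have hper' : ∀ s : ℝ, deriv f (s + L) = deriv f s := by
    intro s
    rw [← deriv_comp_add_const (f := f) (a := L) (x := s), hfun]
  -- abbreviations
  set a := ∫ s in (0:ℝ)..L, f s ^ 2 with hadef
  set b := ∫ s in (0:ℝ)..L, deriv f s ^ 2 with hbdef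
  set d := ∫ s in (0:ℝ)..L, deriv (deriv f) s ^ 2 with hddef
  have ha : 0 ≤ a := intervalIntegral.integral_nonneg hL.le (fun x _ => sq_nonneg _)
  have hb : 0 ≤ b := intervalIntegral.integral_nonneg hL.le (fun x _ => sq_nonneg _)
  have hd : 0 ≤ d := intervalIntegral.integral_nonneg hL.le (fun x _ => sq_nonneg _)
  -- Step 1: b ≤ √a √d via integration by parts
  have hparts : (∫ s in (0:ℝ)..L, f s * deriv (deriv f) s)
      = f L * deriv f L - f 0 * deriv f 0 - ∫ s in (0:ℝ)..L, deriv f s * deriv f s := by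
    exact intervalIntegral.integral_mul_deriv_eq_deriv_mul
      (fun x _ => (hfd x).hasDerivAt) (fun x _ => (hf'd x).hasDerivAt)
      (hf'c.intervalIntegrable 0 L) (hf''c.intervalIntegrable 0 L)
  have hbd : b ≤ Real.sqrt a * Real.sqrt d := by
    have hfL : f L = f 0 := by have := hper 0; rwa [zero_add] at this
    have hf'L : deriv f L = deriv f 0 := by have := hper' 0; rwa [zero_add] at this
    have hbeq : b = -∫ s in (0:ℝ)..L, f s * deriv (deriv f) s := by
      rw [hparts, hfL, hf'L]
      have : (∫ s in (0:ℝ)..L, deriv f s * deriv f s) = b := by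
        rw [hbdef]; congr 1; funext s; ring
      rw [this]; ring
    have h1 : b ≤ |∫ s in (0:ℝ)..L, f s * deriv (deriv f) s| := by
      rw [hbeq]; exact neg_le_abs _
    have h2 : |∫ s in (0:ℝ)..L, f s * deriv (deriv f) s|
        ≤ ∫ s in (0:ℝ)..L, |f s| * |deriv (deriv f) s| := by
      calc |∫ s in (0:ℝ)..L, f s * deriv (deriv f) s|
          ≤ ∫ s in (0:ℝ)..L, |f s * deriv (deriv f) s| :=
            intervalIntegral.abs_integral_le_integral_abs hL.le
        _ = ∫ s in (0:ℝ)..L, |f s| * |deriv (deriv f) s| := by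
            congr 1; funext s; exact abs_mul _ _
    exact le_trans h1 (le_trans h2 (cs_int hL.le hfc hf''c))
  -- Step 2: pointwise bound f x ^ 2 ≤ 2 √a √b on [0, L]
  obtain ⟨c, hcmem, hc0⟩ := exists_zero hL hfc hmean
  have hptw : ∀ x ∈ Set.Icc (0:ℝ) L, f x ^ 2 ≤ 2 * (Real.sqrt a * Real.sqrt b) := by
    intro x hx
    have hftc : (∫ s in c..x, 2 * f s * deriv f s) = f x ^ 2 - f c ^ 2 := by
      apply intervalIntegral.integral_eq_sub_of_hasDerivAt
      · intro s _
        have := ((hfd s).hasDerivAt).pow 2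
        simp only [Nat.cast_ofNat, Nat.add_one_sub_one, pow_one] at this
        exact this
      · exact (((continuous_const.mul hfc).mul hf'c).intervalIntegrable c x)
    have habs : |∫ s in c..x, 2 * f s * deriv f s|
        ≤ ∫ s in (0:ℝ)..L, |2 * f s * deriv f s| := by
      have hnn : 0 ≤ᵐ[volume.restrict (Set.Ioc (0:ℝ) L)] fun s => |2 * f s * deriv f s| :=
        Filter.Eventually.of_forall (fun s => abs_nonneg _)
      have hint : IntervalIntegrable (fun s => |2 * f s * deriv f s|) volume 0 L :=
        (((continuous_const.mul hfc).mul hf'c).abs).intervalIntegrable 0 L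
      have hmono : ∀ u v : ℝ, u ∈ Set.Icc (0:ℝ) L → v ∈ Set.Icc (0:ℝ) L → u ≤ v →
          (∫ s in u..v, |2 * f s * deriv f s|) ≤ ∫ s in (0:ℝ)..L, |2 * f s * deriv f s| :=
        fun u v hu hv huv => intervalIntegral.integral_mono_interval hu.1 huv hv.2 hnn hint
      rcases le_total c x with hcx | hxc
      · calc |∫ s in c..x, 2 * f s * deriv f s|
            ≤ ∫ s in c..x, |2 * f s * deriv f s| :=
              intervalIntegral.abs_integral_le_integral_abs hcx
          _ ≤ _ := hmono c x hcmem hx hcx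
      · rw [intervalIntegral.integral_symm, abs_neg]
        calc |∫ s in x..c, 2 * f s * deriv f s|
            ≤ ∫ s in x..c, |2 * f s * deriv f s| :=
              intervalIntegral.abs_integral_le_integral_abs hxc
          _ ≤ _ := hmono x c hx hcmem hxc
    have heval : (∫ s in (0:ℝ)..L, |2 * f s * deriv f s|)
        = 2 * ∫ s in (0:ℝ)..L, |f s| * |deriv f s| := by
      rw [← intervalIntegral.integral_const_mul]
      congr 1; funext s
      rw [abs_mul, abs_mul, abs_two]; ring
    have hcs := cs_int hL.le hfc hf'c
    calc f x ^ 2 = f x ^ 2 - f c ^ 2 := by rw [hc0]; ring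
      _ = ∫ s in c..x, 2 * f s * deriv f s := hftc.symm
      _ ≤ |∫ s in c..x, 2 * f s * deriv f s| := le_abs_self _
      _ ≤ ∫ s in (0:ℝ)..L, |2 * f s * deriv f s| := habs
      _ = 2 * ∫ s in (0:ℝ)..L, |f s| * |deriv f s| := heval
      _ ≤ 2 * (Real.sqrt a * Real.sqrt b) := by linarith [hcs]
  set M := 2 * (Real.sqrt η * Real.sqrt d + (Real.sqrt η)⁻¹ * Real.sqrt a) with hMdef
  have hM : 0 ≤ M := by positivity
  have hsup : ∀ x ∈ Set.Icc (0:ℝ) L, |f x| ≤ M := fun x hx =>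
    sup_bound hη hη1 ha hb hd (hptw x hx) hbd
  -- Step 4: conclude
  have hcube : (∫ s in (0:ℝ)..L, |f s| ^ 3) ≤ M * a := by
    have hint1 : IntervalIntegrable (fun s => |f s| ^ 3) volume 0 L :=
      Continuous.intervalIntegrable (hfc.abs.pow 3) 0 L
    have hint2 : IntervalIntegrable (fun s => M * f s ^ 2) volume 0 L :=
      Continuous.intervalIntegrable (continuous_const.mul (hfc.pow 2)) 0 L
    have hmono : (∫ s in (0:ℝ)..L, |f s| ^ 3) ≤ ∫ s in (0:ℝ)..L, M * f s ^ 2 := by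
      apply intervalIntegral.integral_mono_on hL.le hint1 hint2
      intro x hx
      have h1 : |f x| ^ 3 = |f x| * f x ^ 2 := by
        rw [← sq_abs]; ring
      rw [h1]
      exact mul_le_mul_of_nonneg_right (hsup x hx) (sq_nonneg _)
    calc (∫ s in (0:ℝ)..L, |f s| ^ 3) ≤ ∫ s in (0:ℝ)..L, M * f s ^ 2 := hmono
      _ = M * a := intervalIntegral.integral_const_mul M _
  have hae : e = a := he
  have hgoal : M * a = 2 * (Real.sqrt η * a * Real.sqrt d + (Real.sqrt η)⁻¹ * (a * Real.sqrt a)) := by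
    rw [hMdef]; ring
  rw [hae]
  calc (∫ s in (0:ℝ)..L, |f s| ^ 3) ≤ M * a := hcube
    _ = 2 * (Real.sqrt η * a * Real.sqrt d + (Real.sqrt η)⁻¹ * (a * Real.sqrt a)) := hgoal
end

section
/- For every δ > 0 there exists a constant C_δ > 0 such that for every L > 0 and every smooth L-periodic function f : ℝ → ℝ with zero mean over one period satisfying e := ∫₀^L f(s)² ds ≤ 1, one has 12 ∫₀^L f(s)² f'(s)² ds ≤ δ e ∫₀^L f''(s)² ds + C_δ e². -/
open Set intervalIntegral MeasureTheory

/-- Cauchy–Schwarz for interval integrals of continuous functions. -/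
lemma my_cs {u v : ℝ → ℝ} (hu : Continuous u) (hv : Continuous v) {a b : ℝ} (hab : a ≤ b) :
    (∫ s in a..b, u s * v s) ^ 2 ≤ (∫ s in a..b, (u s) ^ 2) * (∫ s in a..b, (v s) ^ 2) := by
  set A := ∫ s in a..b, (u s) ^ 2 with hA
  set B := ∫ s in a..b, u s * v s with hB
  set C := ∫ s in a..b, (v s) ^ 2 with hC
  have key : ∀ t : ℝ, 0 ≤ A * (t * t) + (2 * B) * t + C := by
    intro t
    have h1 : IntervalIntegrable (fun s => t ^ 2 * (u s) ^ 2) volume a b :=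
      (continuous_const.mul (hu.pow 2)).intervalIntegrable _ _
    have h2 : IntervalIntegrable (fun s => 2 * t * (u s * v s)) volume a b :=
      (continuous_const.mul (hu.mul hv)).intervalIntegrable _ _
    have h3 : IntervalIntegrable (fun s => (v s) ^ 2) volume a b :=
      (hv.pow 2).intervalIntegrable _ _
    have h : A * (t * t) + (2 * B) * t + C = ∫ s in a..b, (t * u s + v s) ^ 2 := by
      have e1 : ∀ s, (t * u s + v s) ^ 2
          = t ^ 2 * (u s) ^ 2 + 2 * t * (u s * v s) + (v s) ^ 2 := by intro s; ring
      rw [intervalIntegral.integral_congr (g := fun s =>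
        t ^ 2 * (u s) ^ 2 + 2 * t * (u s * v s) + (v s) ^ 2) (fun s _ => e1 s)]
      rw [intervalIntegral.integral_add (h1.add h2) h3, intervalIntegral.integral_add h1 h2,
        intervalIntegral.integral_const_mul, intervalIntegral.integral_const_mul,
        hA, hB, hC]
      ring
    rw [h]
    exact intervalIntegral.integral_nonneg hab (fun s _ => sq_nonneg _)
  have hd := discrim_le_zero key
  rw [discrim] at hd
  nlinarith [hd]

lemma my_alg {X P G e F δ C : ℝ} (hδ : 0 < δ) (hX : 0 ≤ X) (hP : 0 ≤ P) (hG : 0 ≤ G)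
    (he : 0 ≤ e) (hF : 0 ≤ F) (h1 : X ≤ P * G) (h2 : P ^ 2 ≤ 4 * e * G) (h3 : G ^ 2 ≤ e * F)
    (hC : 331776 ≤ 4 * δ ^ 3 * C) (hC0 : 0 ≤ C) :
    12 * X ≤ δ * e * F + C * e ^ 2 := by
  have s1 : X ^ 2 ≤ P ^ 2 * G ^ 2 := by nlinarith
  have s2 : P ^ 2 * G ^ 2 ≤ (4 * e * G) * (e * F) :=
    mul_le_mul h2 h3 (sq_nonneg G) (by positivity)
  have s2' : X ^ 2 ≤ 4 * e ^ 2 * F * G := by nlinarith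
  have s3 : X ^ 4 ≤ (4 * e ^ 2 * F * G) ^ 2 := by
    calc X ^ 4 = (X ^ 2) ^ 2 := by ring
    _ ≤ (4 * e ^ 2 * F * G) ^ 2 := pow_le_pow_left₀ (sq_nonneg X) s2' 2
  have s4 : X ^ 4 ≤ 16 * e ^ 5 * F ^ 3 := by
    nlinarith [mul_le_mul_of_nonneg_left h3 (by positivity : (0:ℝ) ≤ 16 * e ^ 4 * F ^ 2)]
  have hrhs : 0 ≤ δ * e * F + C * e ^ 2 := by positivity
  have key : (12 * X) ^ 4 ≤ (δ * e * F + C * e ^ 2) ^ 4 := by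
    have expand : (δ * e * F + C * e ^ 2) ^ 4 ≥ 4 * (δ * e * F) ^ 3 * (C * e ^ 2) := by
      nlinarith [sq_nonneg (δ * e * F), sq_nonneg (C * e ^ 2),
        mul_nonneg (mul_nonneg (mul_nonneg hδ.le he) hF) (mul_nonneg hC0 (sq_nonneg e)),
        sq_nonneg (δ * e * F - C * e ^ 2), sq_nonneg (δ * e * F + C * e ^ 2),
        mul_nonneg (mul_nonneg hδ.le he) hF]
    have h5 : 4 * (δ * e * F) ^ 3 * (C * e ^ 2) = (4 * δ ^ 3 * C) * (e ^ 5 * F ^ 3) := by ring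
    have h6 : (0:ℝ) ≤ e ^ 5 * F ^ 3 := by positivity
    nlinarith [mul_le_mul_of_nonneg_right hC h6]
  exact le_of_pow_le_pow_left₀ (by norm_num) hrhs key

lemma my_zero {f : ℝ → ℝ} (hf : Continuous f) {L : ℝ} (hL : 0 < L)
    (h0 : (∫ s in (0:ℝ)..L, f s) = 0) : ∃ c ∈ Set.Icc (0:ℝ) L, f c = 0 := by
  obtain ⟨xm, hxm, hm⟩ := isCompact_Icc.exists_isMinOn (Set.nonempty_Icc.2 hL.le)
    (hf.continuousOn (s := Set.Icc (0:ℝ) L))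
  obtain ⟨xM, hxM, hM⟩ := isCompact_Icc.exists_isMaxOn (Set.nonempty_Icc.2 hL.le)
    (hf.continuousOn (s := Set.Icc (0:ℝ) L))
  rcases le_or_gt (f xm) 0 with hm0 | hm0
  · rcases le_or_gt 0 (f xM) with hM0 | hM0
    · have h01 : (0:ℝ) ∈ Set.uIcc (f xm) (f xM) := Set.mem_uIcc.2 (Or.inl ⟨hm0, hM0⟩)
      obtain ⟨c, hc, hfc⟩ := intermediate_value_uIcc (hf.continuousOn) h01
      exact ⟨c, Set.uIcc_subset_Icc hxm hxM hc, hfc⟩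
    · exfalso
      have hpos : (0:ℝ) < ∫ s in (0:ℝ)..L, -f s := by
        apply intervalIntegral.integral_pos hL (hf.neg.continuousOn)
        · intro x hx
          have := hM (Set.mem_Icc.2 ⟨hx.1.le, hx.2⟩)
          simp only [Pi.neg_apply, neg_nonneg] at *
          exact le_of_lt (lt_of_le_of_lt this hM0)
        · exact ⟨xM, hxM, by simpa using hM0⟩
      rw [intervalIntegral.integral_neg, h0, neg_zero] at hpos
      exact lt_irrefl 0 hpos
  · exfalso
    have hpos : (0:ℝ) < ∫ s in (0:ℝ)..L, f s := by
      apply intervalIntegral.integral_pos hL hf.continuousOn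
      · intro x hx
        exact le_of_lt (lt_of_lt_of_le hm0 (hm (Set.mem_Icc.2 ⟨hx.1.le, hx.2⟩)))
      · exact ⟨xm, hxm, hm0⟩
    rw [h0] at hpos
    exact lt_irrefl 0 hpos

/-- Remainder estimate (R2): `12∫ f² f'² ≤ δ e ∫f''² + C_δ e²` for zero-mean
periodic functions with `e = ∫f² ≤ 1`. -/
theorem stmt_14 (δ : ℝ) (hδ : 0 < δ) :
    ∃ Cδ : ℝ, 0 < Cδ ∧
      ∀ (L : ℝ), 0 < L →
        ∀ f : ℝ → ℝ, ContDiff ℝ (⊤ : ℕ∞) f →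
          (∀ s : ℝ, f (s + L) = f s) →
          (∫ s in (0:ℝ)..L, f s) = 0 →
          ∀ e : ℝ, e = (∫ s in (0:ℝ)..L, (f s) ^ 2) → e ≤ 1 →
            12 * (∫ s in (0:ℝ)..L, (f s) ^ 2 * (deriv f s) ^ 2) ≤
              δ * e * (∫ s in (0:ℝ)..L, (deriv (deriv f) s) ^ 2) + Cδ * e ^ 2 := by
  refine ⟨82944 / δ ^ 3 + 1, by positivity, ?_⟩
  intro L hL f hf hper hzero e he _he1
  -- basic regularity
  have hfd : Differentiable ℝ f := hf.differentiable (by simp)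
  have hfs : ContDiff ℝ (⊤ : ℕ∞) f := hf.of_le (by simp)
  have hf1 : ContDiff ℝ (⊤ : ℕ∞) (deriv f) := (contDiff_infty_iff_deriv.mp hfs).2
  have hf1d : Differentiable ℝ (deriv f) := (contDiff_infty_iff_deriv.mp hf1).1
  have cf : Continuous f := hf.continuous
  have cf1 : Continuous (deriv f) := hf1.continuous
  have cf2 : Continuous (deriv (deriv f)) := (contDiff_infty_iff_deriv.mp hf1).2.continuous
  -- abbreviations
  set G := ∫ s in (0:ℝ)..L, (deriv f s) ^ 2 with hG
  set F := ∫ s in (0:ℝ)..L, (deriv (deriv f) s) ^ 2 with hF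
  set X := ∫ s in (0:ℝ)..L, (f s) ^ 2 * (deriv f s) ^ 2 with hX
  set P := ∫ s in (0:ℝ)..L, |2 * f s * deriv f s| with hP
  have he0 : 0 ≤ e := he ▸ intervalIntegral.integral_nonneg hL.le (fun s _ => sq_nonneg _)
  have hG0 : 0 ≤ G := intervalIntegral.integral_nonneg hL.le (fun s _ => sq_nonneg _)
  have hF0 : 0 ≤ F := intervalIntegral.integral_nonneg hL.le (fun s _ => sq_nonneg _)
  have hX0 : 0 ≤ X := intervalIntegral.integral_nonneg hL.le
    (fun s _ => mul_nonneg (sq_nonneg _) (sq_nonneg _))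
  have hP0 : 0 ≤ P := intervalIntegral.integral_nonneg hL.le (fun s _ => abs_nonneg _)
  -- periodicity at endpoints
  have hfL : f L = f 0 := by have := hper 0; rwa [zero_add] at this
  have hf'L : deriv f L = deriv f 0 := by
    have h1 : (fun x => f (x + L)) = f := funext hper
    have h2 := deriv_comp_add_const (f := f) (a := L) (x := 0)
    rw [h1] at h2
    simpa using h2.symm
  -- integration by parts : ∫ f f'' = - G
  have hIBP : (∫ s in (0:ℝ)..L, f s * deriv (deriv f) s) = -G := by
    have h := intervalIntegral.integral_mul_deriv_eq_deriv_mul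
      (u := f) (v := deriv f) (u' := deriv f) (v' := deriv (deriv f))
      (fun x _ => (hfd x).hasDerivAt) (fun x _ => (hf1d x).hasDerivAt)
      (cf1.intervalIntegrable 0 L) (cf2.intervalIntegrable 0 L)
    rw [hfL, hf'L] at h
    have hsq : (∫ s in (0:ℝ)..L, deriv f s * deriv f s) = G := by
      rw [hG]; exact intervalIntegral.integral_congr (fun s _ => (sq (deriv f s)).symm)
    rw [hsq] at h
    rw [h]; ring
  -- Cauchy-Schwarz : G² ≤ e F
  have hGF : G ^ 2 ≤ e * F := by
    have hcs := my_cs cf cf2 hL.le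
    have : G ^ 2 = (∫ s in (0:ℝ)..L, f s * deriv (deriv f) s) ^ 2 := by
      rw [hIBP]; ring
    rw [this, he]
    exact hcs
  -- a zero of f
  obtain ⟨c, hc, hfc⟩ := my_zero cf hL hzero
  -- pointwise bound : f s ² ≤ P on [0, L]
  have hsup : ∀ s ∈ Set.Icc (0:ℝ) L, (f s) ^ 2 ≤ P := by
    intro s hs
    have hftc : (∫ x in c..s, 2 * f x * deriv f x) = f s ^ 2 - f c ^ 2 := by
      apply intervalIntegral.integral_eq_sub_of_hasDerivAt
      · intro x _
        have h : HasDerivAt (fun s => f s ^ 2) _ x := ((hfd x).hasDerivAt).pow 2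
        simpa [pow_one, mul_comm, mul_assoc, mul_left_comm] using h
      · exact (((continuous_const.mul cf).mul cf1)).intervalIntegrable _ _
    have habs : |∫ x in c..s, 2 * f x * deriv f x| ≤ P := by
      have hint : IntervalIntegrable (fun x => |2 * f x * deriv f x|) volume 0 L :=
        (((continuous_const.mul cf).mul cf1).abs).intervalIntegrable _ _
      rcases le_total c s with hcs | hcs
      · calc |∫ x in c..s, 2 * f x * deriv f x|
            ≤ ∫ x in c..s, |2 * f x * deriv f x| :=
              intervalIntegral.abs_integral_le_integral_abs hcs
          _ ≤ P := intervalIntegral.integral_mono_interval hc.1 hcs hs.2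
              (Filter.Eventually.of_forall fun x => abs_nonneg _) hint
      · rw [intervalIntegral.integral_symm, abs_neg]
        calc |∫ x in s..c, 2 * f x * deriv f x|
            ≤ ∫ x in s..c, |2 * f x * deriv f x| :=
              intervalIntegral.abs_integral_le_integral_abs hcs
          _ ≤ P := intervalIntegral.integral_mono_interval hs.1 hcs hc.2
              (Filter.Eventually.of_forall fun x => abs_nonneg _) hint
    calc (f s) ^ 2 = f s ^ 2 - f c ^ 2 := by rw [hfc]; ring
      _ = ∫ x in c..s, 2 * f x * deriv f x := hftc.symm
      _ ≤ |∫ x in c..s, 2 * f x * deriv f x| := le_abs_self _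
      _ ≤ P := habs
  -- X ≤ P G
  have hXPG : X ≤ P * G := by
    have hmono : X ≤ ∫ s in (0:ℝ)..L, P * (deriv f s) ^ 2 := by
      apply intervalIntegral.integral_mono_on hL.le
        (((cf.pow 2).mul (cf1.pow 2)).intervalIntegrable _ _)
        ((continuous_const.mul (cf1.pow 2)).intervalIntegrable _ _)
      intro s hs
      exact mul_le_mul_of_nonneg_right (hsup s hs) (sq_nonneg _)
    rwa [intervalIntegral.integral_const_mul] at hmono
  -- P² ≤ 4 e G
  have hP2 : P ^ 2 ≤ 4 * e * G := by
    have hPeq : P = 2 * ∫ s in (0:ℝ)..L, |f s| * |deriv f s| := by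
      rw [hP, ← intervalIntegral.integral_const_mul]
      apply intervalIntegral.integral_congr
      intro s _
      show |2 * f s * deriv f s| = 2 * (|f s| * |deriv f s|)
      rw [abs_mul, abs_mul, show |(2:ℝ)| = 2 by norm_num]
      ring
    have hcs := my_cs (cf.abs) (cf1.abs) hL.le
    have h1 : (∫ s in (0:ℝ)..L, |f s| ^ 2) = e := by
      rw [he]; exact intervalIntegral.integral_congr (fun s _ => sq_abs _)
    have h2 : (∫ s in (0:ℝ)..L, |deriv f s| ^ 2) = G := by
      rw [hG]; exact intervalIntegral.integral_congr (fun s _ => sq_abs _)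
    rw [h1, h2] at hcs
    rw [hPeq]
    nlinarith [hcs]
  -- conclude
  have hC : 331776 ≤ 4 * δ ^ 3 * (82944 / δ ^ 3 + 1) := by
    have hδ3 : 0 < δ ^ 3 := by positivity
    have heq : 4 * δ ^ 3 * (82944 / δ ^ 3 + 1) = 331776 + 4 * δ ^ 3 := by
      field_simp
      ring
    linarith [hδ3]
  exact my_alg hδ hX0 hP0 hG0 he0 hF0 hXPG hP2 hGF hC (by positivity)
end

section
/- For every smooth L-periodic function f : ℝ → ℝ (L > 0) one has (∫₀^L f'(s)² ds)³ ≤ (∫₀^L f(s)² ds)² · ∫₀^L f'''(s)² ds. -/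
open intervalIntegral Set

/-- Cauchy–Schwarz for interval integrals of continuous functions. -/
lemma cs_aux (L : ℝ) (hL : 0 ≤ L) (u v : ℝ → ℝ) (hu : Continuous u) (hv : Continuous v) :
    (∫ s in (0:ℝ)..L, u s * v s) ^ 2 ≤
      (∫ s in (0:ℝ)..L, u s ^ 2) * (∫ s in (0:ℝ)..L, v s ^ 2) := by
  have key : ∀ t : ℝ, 0 ≤ (∫ s in (0:ℝ)..L, v s ^ 2) * t ^ 2 +
      (2 * ∫ s in (0:ℝ)..L, u s * v s) * t + (∫ s in (0:ℝ)..L, u s ^ 2) := by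
    intro t
    have h0 : 0 ≤ ∫ s in (0:ℝ)..L, (u s + t * v s) ^ 2 :=
      intervalIntegral.integral_nonneg hL (fun s _ => sq_nonneg _)
    have hexp : (∫ s in (0:ℝ)..L, (u s + t * v s) ^ 2)
        = (∫ s in (0:ℝ)..L, v s ^ 2) * t ^ 2 +
          (2 * ∫ s in (0:ℝ)..L, u s * v s) * t + (∫ s in (0:ℝ)..L, u s ^ 2) := by
      have h1 : (∫ s in (0:ℝ)..L, (u s + t * v s) ^ 2)
          = ∫ s in (0:ℝ)..L, (t ^ 2 * v s ^ 2 + ((2 * t) * (u s * v s) + u s ^ 2)) := by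
        congr 1; ext s; ring
      rw [h1, intervalIntegral.integral_add, intervalIntegral.integral_add,
        intervalIntegral.integral_const_mul, intervalIntegral.integral_const_mul]
      · ring
      · exact (continuous_const.mul (hu.mul hv)).intervalIntegrable _ _
      · exact ((hu.pow 2)).intervalIntegrable _ _
      · exact (continuous_const.mul (hv.pow 2)).intervalIntegrable _ _
      · exact ((continuous_const.mul (hu.mul hv)).add (hu.pow 2)).intervalIntegrable _ _
    rw [← hexp]; exact h0
  have key' : ∀ t : ℝ, 0 ≤ (∫ s in (0:ℝ)..L, v s ^ 2) * (t * t) +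
      (2 * ∫ s in (0:ℝ)..L, u s * v s) * t + (∫ s in (0:ℝ)..L, u s ^ 2) := by
    intro t; have := key t; nlinarith [this]
  have hd := discrim_le_zero key'
  rw [discrim] at hd
  nlinarith [hd]

/-- Interpolation `(∫f'²)³ ≤ (∫f²)² ∫f'''²` for smooth periodic functions. -/
theorem stmt_15 (L : ℝ) (hL : 0 < L) (f : ℝ → ℝ)
    (hf : ContDiff ℝ (⊤ : ℕ∞) f)
    (hper : ∀ s : ℝ, f (s + L) = f s) :
    (∫ s in (0:ℝ)..L, (deriv f s) ^ 2) ^ 3 ≤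
      (∫ s in (0:ℝ)..L, (f s) ^ 2) ^ 2 *
        (∫ s in (0:ℝ)..L, (deriv (deriv (deriv f)) s) ^ 2) := by
  have hfi : ContDiff ℝ (⊤ : ℕ∞) f := hf.of_le (by simp)
  set f1 := deriv f with hf1def
  set f2 := deriv f1 with hf2def
  set f3 := deriv f2 with hf3def
  have hf1 : ContDiff ℝ (⊤ : ℕ∞) f1 := (contDiff_infty_iff_deriv.mp hfi).2
  have hf2 : ContDiff ℝ (⊤ : ℕ∞) f2 := (contDiff_infty_iff_deriv.mp hf1).2
  have hf3 : ContDiff ℝ (⊤ : ℕ∞) f3 := (contDiff_infty_iff_deriv.mp hf2).2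
  -- periodicity of derivatives
  have hperiodic : ∀ g : ℝ → ℝ, (∀ s, g (s + L) = g s) → ∀ s, deriv g (s + L) = deriv g s := by
    intro g hg s
    have hEq : (fun x => g (x + L)) = g := funext hg
    calc deriv g (s + L) = deriv (fun x => g (x + L)) s := (deriv_comp_add_const g L s).symm
      _ = deriv g s := by rw [hEq]
  have hper1 : ∀ s, f1 (s + L) = f1 s := hperiodic f hper
  have hper2 : ∀ s, f2 (s + L) = f2 s := hperiodic f1 hper1
  -- abbreviations
  set A := ∫ s in (0:ℝ)..L, (f s) ^ 2 with hA
  set B := ∫ s in (0:ℝ)..L, (f1 s) ^ 2 with hB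
  set C := ∫ s in (0:ℝ)..L, (f2 s) ^ 2 with hC
  set D := ∫ s in (0:ℝ)..L, (f3 s) ^ 2 with hD
  have hA0 : 0 ≤ A := intervalIntegral.integral_nonneg hL.le (fun s _ => sq_nonneg _)
  have hB0 : 0 ≤ B := intervalIntegral.integral_nonneg hL.le (fun s _ => sq_nonneg _)
  have hC0 : 0 ≤ C := intervalIntegral.integral_nonneg hL.le (fun s _ => sq_nonneg _)
  have hD0 : 0 ≤ D := intervalIntegral.integral_nonneg hL.le (fun s _ => sq_nonneg _)
  -- integration by parts lemma
  have ibp : ∀ g : ℝ → ℝ, ContDiff ℝ (⊤ : ℕ∞) g → g L = g 0 → deriv g L = deriv g 0 →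
      (∫ s in (0:ℝ)..L, g s * deriv (deriv g) s) = -∫ s in (0:ℝ)..L, deriv g s * deriv g s := by
    intro g hg hgL hgL'
    have hg1 : ContDiff ℝ (⊤ : ℕ∞) (deriv g) := (contDiff_infty_iff_deriv.mp hg).2
    have hg2 : ContDiff ℝ (⊤ : ℕ∞) (deriv (deriv g)) := (contDiff_infty_iff_deriv.mp hg1).2
    have h := intervalIntegral.integral_mul_deriv_eq_deriv_mul_of_hasDerivAt
      (u := g) (v := deriv g) (u' := deriv g) (v' := deriv (deriv g)) (a := (0:ℝ)) (b := L)
      (hg.continuous.continuousOn) (hg1.continuous.continuousOn)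
      (fun x _ => (hg.differentiable (by simp) x).hasDerivAt)
      (fun x _ => (hg1.differentiable (by simp) x).hasDerivAt)
      (hg1.continuous.intervalIntegrable _ _) (hg2.continuous.intervalIntegrable _ _)
    rw [h, hgL, hgL']; ring
  have hfL : f L = f 0 := by have := hper 0; simpa using this
  have hf1L : f1 L = f1 0 := by have := hper1 0; simpa using this
  have hf2L : f2 L = f2 0 := by have := hper2 0; simpa using this
  -- B = -∫ f f''
  have hB_eq : (∫ s in (0:ℝ)..L, f s * f2 s) = -B := by
    have := ibp f hfi hfL hf1L
    rw [hB]
    rw [show (∫ s in (0:ℝ)..L, (f1 s) ^ 2) = ∫ s in (0:ℝ)..L, f1 s * f1 s by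
      congr 1; ext s; ring]
    exact this
  have hC_eq : (∫ s in (0:ℝ)..L, f1 s * f3 s) = -C := by
    have := ibp f1 hf1 hf1L hf2L
    rw [hC]
    rw [show (∫ s in (0:ℝ)..L, (f2 s) ^ 2) = ∫ s in (0:ℝ)..L, f2 s * f2 s by
      congr 1; ext s; ring]
    exact this
  -- Cauchy–Schwarz applications
  have hBC : B ^ 2 ≤ A * C := by
    have := cs_aux L hL.le f f2 hf.continuous hf2.continuous
    rw [hB_eq] at this
    calc B ^ 2 = (-B) ^ 2 := by ring
      _ ≤ A * C := this
  have hCD : C ^ 2 ≤ B * D := by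
    have := cs_aux L hL.le f1 f3 hf1.continuous hf3.continuous
    rw [hC_eq] at this
    calc C ^ 2 = (-C) ^ 2 := by ring
      _ ≤ B * D := this
  -- conclude: B^3 ≤ A^2 * D
  show B ^ 3 ≤ A ^ 2 * D
  have h4 : B ^ 2 * B ^ 2 ≤ (A * C) * (A * C) := mul_self_le_mul_self (sq_nonneg B) hBC
  have h5 : (A * C) * (A * C) = A ^ 2 * C ^ 2 := by ring
  have h6 : A ^ 2 * C ^ 2 ≤ A ^ 2 * (B * D) := mul_le_mul_of_nonneg_left hCD (sq_nonneg A)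
  have h7 : B ^ 4 ≤ A ^ 2 * B * D := by nlinarith [h4, h6]
  rcases eq_or_lt_of_le hB0 with hB0' | hB0'
  · have : B = 0 := hB0'.symm
    rw [this]; simpa using mul_nonneg (sq_nonneg A) hD0
  · have := mul_le_mul_of_nonneg_right (le_refl (B ^ 3)) hB0'.le
    nlinarith [h7, hB0']
end
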